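/- Let s ∈ ℝ, let φ₀ ∈ C_0^∞(ℝ) be supported in [1/2, 2], and for j ≥ 0 define φ̃₀,ⱼ(λ) = φ₀(λ)·((1 + 2^{2j}λ²)^{s/2} − (2^{j}λ)^{s})·(2^{j}λ)^{-s}. Then for every fixed β ∈ ℕ and γ > 0 one has ‖(1+λ²)^{γ/2} φ̃₀,ⱼ‖_{H^β(ℝ)} ≤ C 2^{-2j}, with C independent of j. -/

import Mathlib

open MeasureTheory ENNReal

/-- The `L²`-Sobolev norm of integer order `β` on the real line, given as the sum of the
`L²` norms of the derivatives up to order `β`. -/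
noncomputable def sobolevNormNat (β : ℕ) (f : ℝ → ℝ) : ℝ≥0∞ :=
  ∑ k ∈ Finset.range (β + 1), eLpNorm (iteratedDeriv k f) 2 volume

noncomputable def Fm (s γ : ℝ) (φ₀ : ℝ → ℝ) (t : ℝ) (lam : ℝ) : ℝ :=
  (1 + lam ^ 2) ^ (γ / 2) *
    (φ₀ lam * ((t + lam ^ 2) ^ (s / 2) - lam ^ s) * lam ^ (-s))

lemma sq_rpow_half (x c : ℝ) (hx : 0 < x) : (x ^ 2) ^ (c / 2) = x ^ c := by
  rw [← Real.rpow_natCast x 2, ← Real.rpow_mul hx.le]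
  congr 1
  ring

lemma iteratedDeriv_congrOn {f g : ℝ → ℝ} {U : Set ℝ} (hU : IsOpen U)
    (h : Set.EqOn f g U) (k : ℕ) :
    Set.EqOn (iteratedDeriv k f) (iteratedDeriv k g) U := by
  induction k with
  | zero => simpa [iteratedDeriv_zero] using h
  | succ k ih =>
    intro x hx
    rw [iteratedDeriv_succ, iteratedDeriv_succ]
    exact (ih.eventuallyEq_of_mem (hU.mem_nhds hx)).deriv_eq

lemma iteratedDeriv_zero_fun' (k : ℕ) :
    iteratedDeriv k (fun _ : ℝ => (0:ℝ)) = fun _ => 0 := by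
  induction k with
  | zero => simp [iteratedDeriv_zero]
  | succ k ih => rw [iteratedDeriv_succ, ih]; funext x; simp

lemma sum_range_add'' (f : ℕ → ℝ) (m n : ℕ) :
    ∑ i ∈ Finset.range (m + n), f i
      = (∑ i ∈ Finset.range m, f i) + ∑ i ∈ Finset.range n, f (m + i) := by
  induction n with
  | zero => simp
  | succ n ih =>
    rw [Nat.add_succ, Finset.sum_range_succ, ih, Finset.sum_range_succ, add_assoc]

lemma rep (s γ : ℝ) (φ₀ : ℝ → ℝ) (hφ₀ : ContDiff ℝ (⊤ : ℕ∞) φ₀) (k : ℕ) :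
    ∃ (n : ℕ) (g : ℕ → ℝ → ℝ) (b : ℕ → ℝ),
      (∀ i, ContDiffOn ℝ (⊤ : ℕ∞) (g i) (Set.Ioi 0)) ∧
      ∀ t ∈ Set.Icc (0:ℝ) 1, ∀ lam : ℝ, 0 < lam →
        iteratedDeriv k (Fm s γ φ₀ t) lam
          = ∑ i ∈ Finset.range n,
              g i lam * ((t + lam ^ 2) ^ (b i) - (lam ^ 2) ^ (b i)) := by
  induction k with
  | zero =>
    refine ⟨1, fun _ lam => (1 + lam ^ 2) ^ (γ / 2) * φ₀ lam * lam ^ (-s),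
      fun _ => s / 2, fun i => ?_, ?_⟩
    · intro x hx
      have h1 : ContDiffAt ℝ (⊤ : ℕ∞) (fun lam : ℝ => (1 + lam ^ 2) ^ (γ / 2)) x := by
        refine ContDiffAt.rpow_const_of_ne ?_ (by positivity)
        exact (contDiff_const.add (contDiff_id.pow 2)).contDiffAt
      have h2 : ContDiffAt ℝ (⊤ : ℕ∞) (fun lam : ℝ => lam ^ (-s)) x :=
        contDiffAt_id.rpow_const_of_ne (ne_of_gt hx)
      exact ((h1.mul hφ₀.contDiffAt).mul h2).contDiffWithinAt
    · intro t ht lam hlam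
      rw [iteratedDeriv_zero]
      rw [Finset.sum_range_one, sq_rpow_half lam s hlam]
      simp only [Fm]
      ring
  | succ k ih =>
    obtain ⟨n, g, b, hg, hrep⟩ := ih
    refine ⟨n + n,
      fun i => if i < n then deriv (g i) else fun x => 2 * b (i - n) * x * g (i - n) x,
      fun i => if i < n then b i else b (i - n) - 1, ?_, ?_⟩
    · intro i
      by_cases h : i < n
      · simpa [h] using (hg i).deriv_of_isOpen isOpen_Ioi (by simp)
      · simp only [h, if_false]
        exact ((contDiffOn_const.mul contDiffOn_id).mul (hg (i - n)))
    · intro t ht lam hlam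
      rw [iteratedDeriv_succ]
      have hEq : iteratedDeriv k (Fm s γ φ₀ t) =ᶠ[nhds lam]
          (fun x => ∑ i ∈ Finset.range n,
            g i x * ((t + x ^ 2) ^ (b i) - (x ^ 2) ^ (b i))) := by
        filter_upwards [isOpen_Ioi.mem_nhds hlam] with x hx
        exact hrep t ht x hx
      rw [hEq.deriv_eq]
      -- compute the derivative of the sum
      have hterm : ∀ i ∈ Finset.range n, HasDerivAt
          (fun x => g i x * ((t + x ^ 2) ^ (b i) - (x ^ 2) ^ (b i)))
          (deriv (g i) lam * ((t + lam ^ 2) ^ (b i) - (lam ^ 2) ^ (b i)) +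
            2 * b i * lam * g i lam *
              ((t + lam ^ 2) ^ (b i - 1) - (lam ^ 2) ^ (b i - 1))) lam := by
        intro i _
        have hgd : HasDerivAt (g i) (deriv (g i) lam) lam := by
          have : DifferentiableAt ℝ (g i) lam :=
            (((hg i).contDiffAt (isOpen_Ioi.mem_nhds hlam)).differentiableAt (by simp))
          exact this.hasDerivAt
        have hx2 : HasDerivAt (fun x : ℝ => x ^ 2) (2 * lam) lam := by
          simpa using hasDerivAt_pow 2 lam
        have h1 : HasDerivAt (fun x : ℝ => (t + x ^ 2) ^ (b i))
            ((2 * lam) * b i * (t + lam ^ 2) ^ (b i - 1)) lam := by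
          have := (hx2.const_add t).rpow_const
            (p := b i) (Or.inl (by nlinarith [ht.1] : t + lam ^ 2 ≠ 0))
          simpa using this
        have h2 : HasDerivAt (fun x : ℝ => (x ^ 2) ^ (b i))
            ((2 * lam) * b i * (lam ^ 2) ^ (b i - 1)) lam := by
          have := hx2.rpow_const (p := b i) (Or.inl (by positivity : lam ^ 2 ≠ 0))
          simpa using this
        have := hgd.mul (h1.sub h2)
        exact this.congr_deriv (by simp only [Pi.sub_apply]; ring)
      have hsum := HasDerivAt.fun_sum hterm
      rw [hsum.deriv]
      rw [sum_range_add'' _ n n, Finset.sum_add_distrib]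
      congr 1
      · apply Finset.sum_congr rfl
        intro i hi
        have h : i < n := Finset.mem_range.mp hi
        simp [h]
      · apply Finset.sum_congr rfl
        intro i hi
        have h : ¬ (n + i < n) := by omega
        have h2 : n + i - n = i := by omega
        simp only [h, if_false, h2]
        try ring


lemma rpow_diff_bound (b : ℝ) : ∃ M : ℝ, 0 ≤ M ∧
    ∀ t ∈ Set.Icc (0:ℝ) 1, ∀ u ∈ Set.Icc (1/4:ℝ) 4,
      |(t + u) ^ b - u ^ b| ≤ M * t := by
  have hcont : ContinuousOn (fun u : ℝ => b * u ^ (b - 1)) (Set.Icc (1/4:ℝ) 5) := by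
    refine continuousOn_const.mul fun x hx => ?_
    exact (Real.continuousAt_rpow_const x (b-1) (Or.inl (by linarith [hx.1]))).continuousWithinAt
  obtain ⟨M0, hM0⟩ :=
    (isCompact_Icc : IsCompact (Set.Icc (1/4:ℝ) 5)).exists_bound_of_continuousOn hcont
  refine ⟨max M0 0, le_max_right _ _, ?_⟩
  intro t ht u hu
  have hder : ∀ x ∈ Set.Icc (1/4:ℝ) 5,
      HasDerivWithinAt (fun u : ℝ => u ^ b) (b * x ^ (b - 1)) (Set.Icc (1/4:ℝ) 5) x :=
    fun x hx => (Real.hasDerivAt_rpow_const (Or.inl (by linarith [hx.1]))).hasDerivWithinAt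
  have hbound : ∀ x ∈ Set.Icc (1/4:ℝ) 5, ‖b * x ^ (b - 1)‖ ≤ max M0 0 :=
    fun x hx => (hM0 x hx).trans (le_max_left _ _)
  have hu1 : u ∈ Set.Icc (1/4:ℝ) 5 := ⟨hu.1, by linarith [hu.2]⟩
  have hu2 : t + u ∈ Set.Icc (1/4:ℝ) 5 := ⟨by linarith [hu.1, ht.1], by linarith [hu.2, ht.2]⟩
  have := Convex.norm_image_sub_le_of_norm_hasDerivWithin_le hder hbound (convex_Icc _ _) hu1 hu2
  simpa [Real.norm_eq_abs, abs_of_nonneg ht.1] using this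

lemma derivBound (s γ : ℝ) (φ₀ : ℝ → ℝ) (hφ₀ : ContDiff ℝ (⊤ : ℕ∞) φ₀) (k : ℕ) :
    ∃ C : ℝ, 0 ≤ C ∧ ∀ t ∈ Set.Icc (0:ℝ) 1, ∀ lam ∈ Set.Icc (1/2:ℝ) 2,
      |iteratedDeriv k (Fm s γ φ₀ t) lam| ≤ C * t := by
  obtain ⟨n, g, b, hg, hrep⟩ := rep s γ φ₀ hφ₀ k
  have h1 : ∀ i : ℕ, ∃ Cg : ℝ, 0 ≤ Cg ∧ ∀ lam ∈ Set.Icc (1/2:ℝ) 2, |g i lam| ≤ Cg := by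
    intro i
    have hsub : Set.Icc (1/2:ℝ) 2 ⊆ Set.Ioi 0 := fun x hx => by
      simp only [Set.mem_Ioi]; linarith [hx.1]
    obtain ⟨Cg, hCg⟩ := (isCompact_Icc : IsCompact (Set.Icc (1/2:ℝ) 2)).exists_bound_of_continuousOn
      ((hg i).continuousOn.mono hsub)
    exact ⟨max Cg 0, le_max_right _ _, fun lam hlam =>
      le_trans (by simpa [Real.norm_eq_abs] using hCg lam hlam) (le_max_left _ _)⟩
  choose Cg hCg0 hCg using h1
  choose M hM0 hM using fun i => rpow_diff_bound (b i)
  refine ⟨∑ i ∈ Finset.range n, Cg i * M i, Finset.sum_nonneg fun i _ =>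
    mul_nonneg (hCg0 i) (hM0 i), ?_⟩
  intro t ht lam hlam
  have hlam0 : 0 < lam := by linarith [hlam.1]
  rw [hrep t ht lam hlam0]
  calc |∑ i ∈ Finset.range n, g i lam * ((t + lam ^ 2) ^ (b i) - (lam ^ 2) ^ (b i))|
      ≤ ∑ i ∈ Finset.range n, |g i lam * ((t + lam ^ 2) ^ (b i) - (lam ^ 2) ^ (b i))| :=
        Finset.abs_sum_le_sum_abs _ _
    _ ≤ ∑ i ∈ Finset.range n, (Cg i * M i) * t := by
        refine Finset.sum_le_sum fun i _ => ?_
        rw [abs_mul]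
        have hu : lam ^ 2 ∈ Set.Icc (1/4:ℝ) 4 := by
          constructor <;> nlinarith [hlam.1, hlam.2]
        have h2 := hM i t ht (lam ^ 2) hu
        have h3 := hCg i lam hlam
        calc |g i lam| * |(t + lam ^ 2) ^ (b i) - (lam ^ 2) ^ (b i)|
            ≤ Cg i * (M i * t) := by
              exact mul_le_mul h3 h2 (abs_nonneg _) (hCg0 i)
          _ = (Cg i * M i) * t := by ring
    _ = (∑ i ∈ Finset.range n, Cg i * M i) * t := by rw [Finset.sum_mul]

lemma zero_outside (s γ : ℝ) (φ₀ : ℝ → ℝ)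
    (hsupp : Function.support φ₀ ⊆ Set.Icc (1 / 2) 2) (t : ℝ) (k : ℕ) :
    ∀ lam ∉ Set.Icc (1/2:ℝ) 2, iteratedDeriv k (Fm s γ φ₀ t) lam = 0 := by
  intro lam hlam
  have hEq : Set.EqOn (Fm s γ φ₀ t) (fun _ => 0) (Set.Icc (1/2:ℝ) 2)ᶜ := by
    intro x hx
    have hzero : φ₀ x = 0 := by
      by_contra h
      exact hx (hsupp (Function.mem_support.2 h))
    simp [Fm, hzero]
  have := iteratedDeriv_congrOn (isOpen_compl_iff.2 isClosed_Icc) hEq k hlam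
  rw [this, iteratedDeriv_zero_fun']

lemma fun_eq (s γ : ℝ) (φ₀ : ℝ → ℝ)
    (hsupp : Function.support φ₀ ⊆ Set.Icc (1 / 2) 2) (j : ℕ) :
    (fun lam : ℝ => (1 + lam ^ 2) ^ (γ / 2) *
        (φ₀ lam *
          ((1 + (2 : ℝ) ^ (2 * (j : ℝ)) * lam ^ 2) ^ (s / 2)
            - ((2 : ℝ) ^ (j : ℝ) * lam) ^ s) *
          ((2 : ℝ) ^ (j : ℝ) * lam) ^ (-s)))
      = Fm s γ φ₀ ((2:ℝ) ^ (-(2 * (j:ℝ)))) := by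
  funext lam
  by_cases hφ : φ₀ lam = 0
  · simp [Fm, hφ]
  · have hmem := hsupp (Function.mem_support.2 hφ)
    have hlam : 0 < lam := lt_of_lt_of_le (by norm_num) hmem.1
    set P : ℝ := (2:ℝ) ^ (j:ℝ) with hP
    have hP0 : 0 < P := Real.rpow_pos_of_pos (by norm_num) _
    set t : ℝ := (2:ℝ) ^ (-(2 * (j:ℝ))) with htd
    have ht0 : 0 < t := Real.rpow_pos_of_pos (by norm_num) _
    have hPsq : P ^ 2 = (2:ℝ) ^ (2 * (j:ℝ)) := by
      rw [hP, ← Real.rpow_natCast ((2:ℝ) ^ (j:ℝ)) 2, ← Real.rpow_mul (by norm_num : (0:ℝ) ≤ 2)]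
      congr 1; push_cast; ring
    have htinv : P ^ 2 * t = 1 := by
      rw [hPsq, htd, ← Real.rpow_add (by norm_num : (0:ℝ) < 2)]
      simp
    have hX : 1 + (2:ℝ) ^ (2 * (j:ℝ)) * lam ^ 2 = P ^ 2 * (t + lam ^ 2) := by
      rw [mul_add, htinv, hPsq]
    have hXr : (1 + (2:ℝ) ^ (2 * (j:ℝ)) * lam ^ 2) ^ (s/2)
        = P ^ s * (t + lam ^ 2) ^ (s/2) := by
      rw [hX, Real.mul_rpow (by positivity) (by positivity), sq_rpow_half P s hP0]
    have hY : (P * lam) ^ s = P ^ s * lam ^ s :=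
      Real.mul_rpow hP0.le hlam.le
    have hZ : (P * lam) ^ (-s) = P ^ (-s) * lam ^ (-s) :=
      Real.mul_rpow hP0.le hlam.le
    have hcancel : P ^ s * P ^ (-s) = 1 := by
      rw [← Real.rpow_add hP0]; simp
    rw [hXr, hY, hZ]
    simp only [Fm]
    linear_combination ((1 + lam ^ 2) ^ (γ / 2) *
      (φ₀ lam * ((t + lam ^ 2) ^ (s / 2) - lam ^ s) * lam ^ (-s))) * hcancel

lemma elp_bound (C t : ℝ) (hC : 0 ≤ C) (ht0 : 0 ≤ t) (f : ℝ → ℝ)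
    (hbound : ∀ lam ∈ Set.Icc (1/2:ℝ) 2, |f lam| ≤ C * t)
    (hzero : ∀ lam ∉ Set.Icc (1/2:ℝ) 2, f lam = 0) :
    eLpNorm f 2 volume ≤ ENNReal.ofReal (2 * (C * t)) := by
  have h1 : ∀ x, ‖f x‖ ≤ ‖(Set.Icc (1/2:ℝ) 2).indicator (fun _ => C * t) x‖ := by
    intro x
    by_cases hx : x ∈ Set.Icc (1/2:ℝ) 2
    · rw [Set.indicator_of_mem hx, Real.norm_eq_abs, Real.norm_eq_abs,
        abs_of_nonneg (mul_nonneg hC ht0)]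
      exact hbound x hx
    · rw [Set.indicator_of_notMem hx]
      simp [hzero x hx]
  refine (eLpNorm_mono h1).trans ?_
  rw [eLpNorm_indicator_const measurableSet_Icc (by norm_num) (by norm_num)]
  have hv : volume (Set.Icc (1/2:ℝ) 2) = ENNReal.ofReal (3/2) := by
    rw [Real.volume_Icc]; norm_num
  rw [hv]
  have htoReal : (1 : ℝ) / (2:ℝ≥0∞).toReal = 1/2 := by simp
  rw [htoReal]
  have hrpow : ENNReal.ofReal (3/2) ^ ((1:ℝ)/2) ≤ 2 := by
    calc ENNReal.ofReal (3/2) ^ ((1:ℝ)/2)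
        ≤ ENNReal.ofReal 4 ^ ((1:ℝ)/2) :=
          ENNReal.rpow_le_rpow (ENNReal.ofReal_le_ofReal (by norm_num)) (by norm_num)
      _ = ENNReal.ofReal (4 ^ ((1:ℝ)/2)) := ENNReal.ofReal_rpow_of_pos (by norm_num)
      _ = ENNReal.ofReal 2 := by
          congr 1
          rw [show (4:ℝ) = 2 ^ (2:ℕ) by norm_num, ← Real.rpow_natCast 2 2,
            ← Real.rpow_mul (by norm_num : (0:ℝ) ≤ 2)]
          norm_num
      _ ≤ 2 := by
          rw [show (2:ℝ≥0∞) = ENNReal.ofReal 2 by simp]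
  calc (‖C * t‖₊ : ℝ≥0∞) * ENNReal.ofReal (3/2) ^ ((1:ℝ)/2)
      ≤ ENNReal.ofReal (C * t) * 2 := by
        refine mul_le_mul' ?_ hrpow
        rw [← ENNReal.ofReal_coe_nnreal, coe_nnnorm, Real.norm_eq_abs,
          abs_of_nonneg (mul_nonneg hC ht0)]
    _ = ENNReal.ofReal (2 * (C * t)) := by
        rw [ENNReal.ofReal_mul (by norm_num : (0:ℝ) ≤ 2), ENNReal.ofReal_ofNat, mul_comm]

/-- The multiplier bound for
`φ̃₀,ⱼ(λ) = φ₀(λ)·((1 + 2^{2j}λ²)^{s/2} − (2^{j}λ)^{s})·(2^{j}λ)^{-s}`: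
its weighted Sobolev norm `‖(1+λ²)^{γ/2} φ̃₀,ⱼ‖_{H^β(ℝ)}` is bounded by `C 2^{-2j}`
uniformly in `j ≥ 0`. -/
theorem weighted_sobolev_multiplier_bound
    (s γ : ℝ) (hγ : 0 < γ) (β : ℕ)
    (φ₀ : ℝ → ℝ) (hφ₀ : ContDiff ℝ (⊤ : ℕ∞) φ₀)
    (hsupp : Function.support φ₀ ⊆ Set.Icc (1 / 2) 2) :
    ∃ C : ℝ, 0 < C ∧ ∀ j : ℕ,
      sobolevNormNat β
        (fun lam : ℝ => (1 + lam ^ 2) ^ (γ / 2) *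
          (φ₀ lam *
            ((1 + (2 : ℝ) ^ (2 * (j : ℝ)) * lam ^ 2) ^ (s / 2)
              - ((2 : ℝ) ^ (j : ℝ) * lam) ^ s) *
            ((2 : ℝ) ^ (j : ℝ) * lam) ^ (-s))) ≤
      ENNReal.ofReal (C * (2 : ℝ) ^ (-(2 * (j : ℝ)))) := by
  choose Cf hCf0 hCf using fun k => derivBound s γ φ₀ hφ₀ k
  have hS : 0 ≤ ∑ k ∈ Finset.range (β + 1), 2 * Cf k :=
    Finset.sum_nonneg fun k _ => mul_nonneg (by norm_num) (hCf0 k)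
  refine ⟨(∑ k ∈ Finset.range (β + 1), 2 * Cf k) + 1, by linarith, ?_⟩
  intro j
  set t : ℝ := (2:ℝ) ^ (-(2 * (j:ℝ))) with htd
  have ht0 : 0 < t := Real.rpow_pos_of_pos (by norm_num) _
  have ht1 : t ≤ 1 := by
    apply Real.rpow_le_one_of_one_le_of_nonpos (by norm_num)
    have : (0:ℝ) ≤ 2 * (j:ℝ) := by positivity
    linarith
  rw [fun_eq s γ φ₀ hsupp j]
  unfold sobolevNormNat
  calc ∑ k ∈ Finset.range (β + 1), eLpNorm (iteratedDeriv k (Fm s γ φ₀ t)) 2 volume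
      ≤ ∑ k ∈ Finset.range (β + 1), ENNReal.ofReal (2 * (Cf k * t)) := by
        refine Finset.sum_le_sum fun k _ => ?_
        exact elp_bound (Cf k) t (hCf0 k) ht0.le _
          (fun lam hlam => hCf k t ⟨ht0.le, ht1⟩ lam hlam)
          (zero_outside s γ φ₀ hsupp t k)
    _ = ENNReal.ofReal (∑ k ∈ Finset.range (β + 1), 2 * (Cf k * t)) := by
        rw [ENNReal.ofReal_sum_of_nonneg]
        intro k _
        have := hCf0 k
        positivity
    _ ≤ ENNReal.ofReal (((∑ k ∈ Finset.range (β + 1), 2 * Cf k) + 1) * t) := by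
        apply ENNReal.ofReal_le_ofReal
        have : ∑ k ∈ Finset.range (β + 1), 2 * (Cf k * t)
            = (∑ k ∈ Finset.range (β + 1), 2 * Cf k) * t := by
          rw [Finset.sum_mul]
          exact Finset.sum_congr rfl fun k _ => by ring
        rw [this]
        nlinarith [ht0.le, hS]
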